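/- arXiv:1611.04014 — 3 statements merged into one kernel-verified Lean document; each statement's English description precedes it below -/
import Mathlib

section
/- Let u, v be permutations of [n] and E an embedding index set satisfying the overlap condition. If the minimal clusters m(u,E) and m(v,E) have different letter-sums (heights), then u is not super-strongly Wilf equivalent to v. -/
abbrev Word := List ℕ+

/-- Height (letter-sum) of a word. -/
def ht (w : Word) : ℕ := (w.map (fun x => (x : ℕ))).sum

/-- Embedding index set of `u` into `w` (1-based positions). -/
def Em (u w : Word) : Set ℕ :=
  {j | 1 ≤ j ∧ j - 1 + u.length ≤ w.length ∧
    ∀ k, k < u.length → u.getD k 1 ≤ w.getD (j - 1 + k) 1}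

/-- Super-strong Wilf equivalence. -/
def SSWilf (u v : Word) : Prop :=
  ∃ f : Word → Word, Function.Bijective f ∧
    (∀ w, (f w).length = w.length ∧ ht (f w) = ht w) ∧
    (∀ w, Em u w = Em v (f w))

/-- `w` is a permutation of `[n]`. -/
def IsPerm (n : ℕ) (w : Word) : Prop :=
  w.length = n ∧ ∀ k : ℕ, 1 ≤ k → k ≤ n → (w.map (fun x => (x : ℕ))).count k = 1

/-- 1-based position of the letter `k` in `u`. -/
def pos (u : Word) (k : ℕ) : ℕ := (u.map (fun x => (x : ℕ))).idxOf k + 1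

/-- `E` is an embedding set satisfying the overlap condition for words of length `n`. -/
def IsEmbSet (n : ℕ) (E : Finset ℕ) : Prop :=
  1 ∈ E ∧ (∀ a ∈ E, 1 ≤ a) ∧
  ∀ a ∈ E, (∀ b ∈ E, b ≤ a) ∨ ∃ b ∈ E, a < b ∧ b ≤ a + (n - 1)

/-- The letter at (1-based) position `p` of the (pre-)cluster of `u` on `E`. -/
def clusterAt (u : Word) (E : Finset ℕ) (p : ℕ) : ℕ+ :=
  (E.sup (fun a => if a ≤ p ∧ p < a + u.length then ((u.getD (p - a) 1 : ℕ+) : ℕ) else 1)).toPNat'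

/-- The minimal cluster of `u` with embedding set `E`. -/
def mcluster (u : Word) (E : Finset ℕ) : Word :=
  (List.range (E.sup id - 1 + u.length)).map (fun j => clusterAt u E (j + 1))

/-- The extended minimal cluster of `u` on `E` with prescribed length `n`. -/
def extCluster (u : Word) (E : Finset ℕ) (n : ℕ) : Word :=
  (List.range n).map (fun j => clusterAt u E (j + 1))

/-- The multiset `i⁺(u)` of distances from the letter `i` to larger letters. -/
def iplus (n : ℕ) (u : Word) (i : ℕ) : Multiset ℕ :=
  (Multiset.Icc (i + 1) n).map (fun j => Nat.dist (pos u i) (pos u j))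

/-- Cross equivalence of permutations of `[n]`. -/
def CrossEq (n : ℕ) (u v : Word) : Prop :=
  ∀ i, 1 ≤ i → i ≤ n - 1 → iplus n u i = iplus n v i

/-- Increasing list of (1-based) positions in `u` of the letters `≥ i`. -/
def posList (u : Word) (i : ℕ) : List ℕ :=
  ((List.range u.length).filter (fun k => i ≤ ((u.getD k 1 : ℕ+) : ℕ))).map (· + 1)

/-- `Δᵢ(u⁻¹)`: consecutive differences of positions of letters `≥ i` in `u`. -/
def Delta (u : Word) (i : ℕ) : List ℕ :=
  List.zipWith (fun a b => b - a) (posList u i) (posList u i).tail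

/-- Shift `(p-1) + E` of an embedding set. -/
def shiftSet (p : ℕ) (E : Finset ℕ) : Finset ℕ := E.image (fun e => p - 1 + e)

/-! The minimal cluster `m(u,E)` is the pointwise least word containing `u` at every position of
`E`, so it has the least height among all words `w` with `E ⊆ Em(u,w)`. A super-strong Wilf
equivalence preserves embedding sets and heights in both directions, hence the least heights for
`u` and for `v` coincide. -/

lemma ht_cons (a : ℕ+) (w : Word) : ht (a :: w) = a + ht w := by
  simp [ht]

lemma ht_le_ht_of_getD_le {w w' : Word} (hlen : w.length ≤ w'.length)
    (hle : ∀ j < w.length, w.getD j 1 ≤ w'.getD j 1) : ht w ≤ ht w' := by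
  induction w generalizing w' with
  | nil => exact Nat.zero_le _
  | cons a t ih =>
    obtain _ | ⟨b, t'⟩ := w'
    · simp at hlen
    · have hab : a ≤ b := by simpa using hle 0 (by simp)
      have htt : ht t ≤ ht t' :=
        ih (by simpa using hlen) fun j hj => by simpa using hle (j + 1) (by simpa using hj)
      rw [ht_cons, ht_cons]
      exact Nat.add_le_add (PNat.coe_le_coe _ _ |>.mpr hab) htt

lemma coe_clusterAt {E : Finset ℕ} (hE : E.Nonempty) (u : Word) (p : ℕ) :
    ((clusterAt u E p : ℕ+) : ℕ) =
      E.sup fun a => if a ≤ p ∧ p < a + u.length then ((u.getD (p - a) 1 : ℕ+) : ℕ) else 1 := by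
  obtain ⟨a, ha⟩ := hE
  refine PNat.toPNat'_coe (lt_of_lt_of_le ?_ (Finset.le_sup ha))
  split
  · exact PNat.pos _
  · exact Nat.one_pos

lemma length_mcluster (u : Word) (E : Finset ℕ) :
    (mcluster u E).length = E.sup id - 1 + u.length := by
  simp [mcluster]

lemma getD_mcluster {u : Word} {E : Finset ℕ} {j : ℕ} (hj : j < E.sup id - 1 + u.length) :
    (mcluster u E).getD j 1 = clusterAt u E (j + 1) := by
  rw [List.getD_eq_getElem _ _ (by rwa [length_mcluster])]
  simp [mcluster]

lemma mem_Em_mcluster {u : Word} {E : Finset ℕ} {a : ℕ} (ha : a ∈ E) (ha₁ : 1 ≤ a) :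
    a ∈ Em u (mcluster u E) := by
  have hsup : a ≤ E.sup id := Finset.le_sup (f := id) ha
  refine ⟨ha₁, by rw [length_mcluster]; omega, fun k hk => ?_⟩
  rw [getD_mcluster (by omega), show a - 1 + k + 1 = a + k by omega, ← PNat.coe_le_coe,
    coe_clusterAt ⟨a, ha⟩]
  have hcond : a ≤ a + k ∧ a + k < a + u.length := by omega
  simpa [hcond] using Finset.le_sup (f := fun b => if b ≤ a + k ∧ a + k < b + u.length
    then ((u.getD (a + k - b) 1 : ℕ+) : ℕ) else 1) ha

lemma ht_mcluster_le_of_subset_Em {u w : Word} {E : Finset ℕ} (hE : E.Nonempty)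
    (hEw : ↑E ⊆ Em u w) : ht (mcluster u E) ≤ ht w := by
  obtain ⟨b, hb, hb_sup⟩ := Finset.exists_mem_eq_sup E hE id
  have hlen : (mcluster u E).length ≤ w.length := by
    have := (hEw hb).2.1
    rw [length_mcluster, hb_sup, id]
    omega
  refine ht_le_ht_of_getD_le hlen fun j hj => ?_
  rw [length_mcluster] at hj
  rw [getD_mcluster hj, ← PNat.coe_le_coe, coe_clusterAt hE]
  refine Finset.sup_le fun a ha => ?_
  split
  · next hcond =>
    obtain ⟨ha₁, -, hle⟩ := hEw ha
    have hk : j + 1 - a < u.length := by omega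
    have hidx : a - 1 + (j + 1 - a) = j := by omega
    simpa only [hidx, PNat.coe_le_coe] using hle _ hk
  · exact PNat.pos _

theorem SSWilf.symm {u v : Word} (h : SSWilf u v) : SSWilf v u := by
  obtain ⟨f, hf, hpres, hEm⟩ := h
  let g := (Equiv.ofBijective f hf).symm
  have hfg : ∀ w, f (g w) = w := (Equiv.ofBijective f hf).apply_symm_apply
  refine ⟨g, g.bijective, fun w => ?_, fun w => ?_⟩
  · obtain ⟨hlen, hht⟩ := hpres (g w)
    rw [hfg] at hlen hht
    exact ⟨hlen.symm, hht.symm⟩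
  · rw [hEm, hfg]

lemma SSWilf.ht_mcluster_le {u v : Word} (h : SSWilf u v) {E : Finset ℕ} (hE : E.Nonempty)
    (hE₁ : ∀ a ∈ E, 1 ≤ a) : ht (mcluster v E) ≤ ht (mcluster u E) := by
  obtain ⟨f, -, hpres, hEm⟩ := h
  calc ht (mcluster v E) ≤ ht (f (mcluster u E)) :=
        ht_mcluster_le_of_subset_Em hE fun a ha => hEm _ ▸ mem_Em_mcluster ha (hE₁ a ha)
    _ = ht (mcluster u E) := (hpres _).2

theorem not_sswilf_of_mcluster_height_ne_general (n : ℕ) (u v : Word)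
    (E : Finset ℕ) (hE : IsEmbSet n E)
    (h : ht (mcluster u E) ≠ ht (mcluster v E)) : ¬ SSWilf u v := by
  obtain ⟨hE_one, hE_pos, -⟩ := hE
  intro huv
  exact h <| le_antisymm (huv.symm.ht_mcluster_le ⟨1, hE_one⟩ hE_pos)
    (huv.ht_mcluster_le ⟨1, hE_one⟩ hE_pos)

/-- if the minimal clusters of two permutations of `[n]` on some
embedding set have different heights, the permutations are not super-strongly
Wilf equivalent. -/
theorem not_sswilf_of_mcluster_height_ne (n : ℕ) (u v : Word)
    (hu : IsPerm n u) (hv : IsPerm n v) (E : Finset ℕ) (hE : IsEmbSet n E)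
    (h : ht (mcluster u E) ≠ ht (mcluster v E)) : ¬ SSWilf u v :=
  not_sswilf_of_mcluster_height_ne_general n u v E hE h
end

section
/- Let n ∈ ℕ and let x, y, z be words such that x(n−1)ynz is a permutation of [n] (where (n−1) and n denote single letters). Then x(n−1)ynz is super-strongly Wilf equivalent to xny(n−1)z; i.e., swapping the positions of the two largest letters n−1 and n in a permutation yields a super-strongly Wilf equivalent permutation. -/
/-!
Sort words by length, height and embedding set. By Möbius inversion on the Boolean lattice of
embedding sets, it suffices to count, for each `E`, the words of given length and height into
which `u` embeds at least at the positions of `E`; these are exactly the words dominating the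
cluster `p ↦ clusterAt u E p` letterwise. Trading the floor `c` for another floor `c'` letter by
letter (`w ↦ w - c + c'`) shows that this number depends only on the height of the cluster.
If every other letter is at most `a ≤ b`, swapping `a` and `b` changes the cluster only at
positions covered by the copies of exactly one of the two letters: those covered only by copies
of `a` go from `a` to `b`, those covered only by copies of `b` from `b` to `a`, and both kinds
are equally many since `a` and `b` have `#E` copies each. So the height is unchanged.
-/

open Finset

lemma ht_eq_sum_map (w : Word) : ht w = (w.map (fun c : ℕ+ => (c : ℕ))).sum := by
  simp [ht, ← List.map_eq_flatMap, Function.comp_def]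

lemma ht_eq_sum (w : Word) : ht w = ∑ i ∈ range w.length, (w.getD i 1 : ℕ) := by
  rw [ht_eq_sum_map, sum_range, ← List.sum_ofFn]
  congr 1
  apply List.ext_getElem <;> simp

lemma setOf_length_ht_finite (ℓ s : ℕ) : {w : Word | w.length = ℓ ∧ ht w = s}.Finite := by
  refine ((List.finite_length_eq (Set.Iic s.succPNat) ℓ).image (List.map Subtype.val)).subset ?_
  rintro w ⟨hℓ, hs⟩
  have hle : ∀ c ∈ w, c ∈ Set.Iic s.succPNat := fun c hc => by
    rw [Set.mem_Iic, ← PNat.coe_le_coe, Nat.succPNat_coe, ← hs, ht_eq_sum_map]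
    exact Nat.le_succ_of_le (List.le_sum_of_mem (List.mem_map_of_mem hc))
  lift w to List (Set.Iic s.succPNat) using hle
  exact ⟨w, by simpa using hℓ, rfl⟩

noncomputable def words (ℓ s : ℕ) : Finset Word := (setOf_length_ht_finite ℓ s).toFinset

@[simp] lemma mem_words {ℓ s : ℕ} {w : Word} : w ∈ words ℓ s ↔ w.length = ℓ ∧ ht w = s :=
  Set.Finite.mem_toFinset _

lemma Em_subset_Icc (u w : Word) : Em u w ⊆ Set.Icc 1 (w.length + 1 - u.length) := by
  rintro j ⟨h1, h2, -⟩
  exact ⟨h1, by omega⟩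

noncomputable def embFinset (u w : Word) : Finset ℕ :=
  ((Set.finite_Icc _ _).subset (Em_subset_Icc u w)).toFinset

@[simp] lemma coe_embFinset (u w : Word) : (embFinset u w : Set ℕ) = Em u w :=
  Set.Finite.coe_toFinset _

lemma embFinset_subset (u w : Word) : embFinset u w ⊆ Icc 1 (w.length + 1 - u.length) := by
  rw [← coe_subset, coe_embFinset, coe_Icc]
  exact Em_subset_Icc u w

lemma sswilf_of_card_filter_eq {u v : Word}
    (h : ∀ ℓ s E, #{w ∈ words ℓ s | embFinset u w = E} = #{w ∈ words ℓ s | embFinset v w = E}) :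
    SSWilf u v := by
  let key (t w : Word) : ℕ × ℕ × Finset ℕ := (w.length, ht w, embFinset t w)
  have fiber (t : Word) (k : ℕ × ℕ × Finset ℕ) :
      {w // key t w = k} ≃ ({w ∈ words k.1 k.2.1 | embFinset t w = k.2.2} : Finset Word) :=
    Equiv.subtypeEquivRight fun w => by simp [key, Prod.ext_iff, and_assoc]
  let e (k : ℕ × ℕ × Finset ℕ) : {w // key u w = k} ≃ {w // key v w = k} :=
    (fiber u k).trans ((Finset.equivOfCardEq (h k.1 k.2.1 k.2.2)).trans (fiber v k).symm)
  refine ⟨Equiv.ofFiberEquiv e, (Equiv.ofFiberEquiv e).bijective, fun w => ?_, fun w => ?_⟩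
  all_goals have hf := Equiv.ofFiberEquiv_map e w
  all_goals simp only [key, Prod.mk.injEq] at hf
  · exact ⟨hf.1, hf.2.1⟩
  · rw [← coe_embFinset, ← coe_embFinset, hf.2.2]

lemma eq_of_sum_supset_eq {α M : Type*} [DecidableEq α] [AddCancelCommMonoid M] {V : Finset α}
    {f g : Finset α → M}
    (h : ∀ E ⊆ V, ∑ E' ∈ V.powerset with E ⊆ E', f E' = ∑ E' ∈ V.powerset with E ⊆ E', g E') :
    ∀ E ⊆ V, f E = g E := by
  intro E hE
  refine strongDownwardInduction (p := fun E => E ⊆ V → f E = g E) ?_ E (card_le_card hE) hE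
  intro E ih _ hE
  have hE_mem : E ∈ {E' ∈ V.powerset | E ⊆ E'} := by simp [hE]
  have h_erase : ∑ E' ∈ {E' ∈ V.powerset | E ⊆ E'}.erase E, f E' =
      ∑ E' ∈ {E' ∈ V.powerset | E ⊆ E'}.erase E, g E' := by
    refine sum_congr rfl fun E' hE' => ?_
    simp only [mem_erase, mem_filter, mem_powerset] at hE'
    exact ih (card_le_card hE'.2.1) (ssubset_of_subset_of_ne hE'.2.2 (Ne.symm hE'.1)) hE'.2.1
  have := h E hE
  rw [← add_sum_erase _ _ hE_mem, ← add_sum_erase _ _ hE_mem, h_erase] at this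
  exact add_right_cancel this

lemma card_filter_subset_embFinset_eq_sum (u : Word) (ℓ s : ℕ) (E : Finset ℕ) :
    #{w ∈ words ℓ s | E ⊆ embFinset u w} =
      ∑ E' ∈ (Icc 1 (ℓ + 1 - u.length)).powerset with E ⊆ E',
        #{w ∈ words ℓ s | embFinset u w = E'} := by
  rw [card_eq_sum_card_fiberwise (f := embFinset u)
    (t := {E' ∈ (Icc 1 (ℓ + 1 - u.length)).powerset | E ⊆ E'})]
  · refine sum_congr rfl fun E' hE' => ?_
    rw [filter_filter]
    refine congrArg card (filter_congr fun w _ => ?_)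
    simp only [mem_filter] at hE'
    constructor
    · exact And.right
    · rintro rfl; exact ⟨hE'.2, rfl⟩
  · intro w hw
    rw [mem_coe, mem_filter, mem_words] at hw
    rw [mem_coe, mem_filter, mem_powerset, ← hw.1.1]
    exact ⟨embFinset_subset u w, hw.2⟩

lemma sswilf_of_card_filter_subset_eq {u v : Word} (hl : u.length = v.length)
    (h : ∀ ℓ s E, E ⊆ Icc 1 (ℓ + 1 - u.length) →
      #{w ∈ words ℓ s | E ⊆ embFinset u w} = #{w ∈ words ℓ s | E ⊆ embFinset v w}) :
    SSWilf u v := by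
  refine sswilf_of_card_filter_eq fun ℓ s E => ?_
  by_cases hE : E ⊆ Icc 1 (ℓ + 1 - u.length)
  · refine eq_of_sum_supset_eq (f := fun E => #{w ∈ words ℓ s | embFinset u w = E})
      (g := fun E => #{w ∈ words ℓ s | embFinset v w = E}) (fun E hE => ?_) E hE
    rw [← card_filter_subset_embFinset_eq_sum, hl, ← card_filter_subset_embFinset_eq_sum]
    exact h ℓ s E hE
  · have hempty (t : Word) (ht : t.length = u.length) :
        {w ∈ words ℓ s | embFinset t w = E} = ∅ := by
      refine filter_false_of_mem fun w hw hwE => hE ?_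
      rw [← hwE, ← ht, ← (mem_words.1 hw).1]
      exact embFinset_subset t w
    rw [hempty u rfl, hempty v hl.symm]

lemma clusterAt_le_iff {u : Word} {E : Finset ℕ} {p : ℕ} {c : ℕ+} :
    clusterAt u E p ≤ c ↔ ∀ j ∈ E, j ≤ p → p < j + u.length → u.getD (p - j) 1 ≤ c := by
  -- `toPNat'` turns the supremum `0` over an empty `E` into `1`
  have toPNat'_le_iff (m : ℕ) : m.toPNat' ≤ c ↔ m ≤ c := by
    rw [← PNat.coe_le_coe, Nat.toPNat'_coe]
    have := c.pos
    split_ifs <;> omega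
  rw [clusterAt, toPNat'_le_iff, Finset.sup_le_iff]
  refine forall₂_congr fun j _ => ?_
  split_ifs with hj
  · simp [hj]
  · simp only [not_and] at hj
    exact iff_of_true c.pos fun h1 h2 => absurd h2 (hj h1)

lemma le_clusterAt {u : Word} {E : Finset ℕ} {j p : ℕ} (hj : j ∈ E) (hjp : j ≤ p)
    (hp : p < j + u.length) : u.getD (p - j) 1 ≤ clusterAt u E p :=
  clusterAt_le_iff.1 le_rfl j hj hjp hp

lemma clusterAt_congr {u u' : Word} {E : Finset ℕ} {p : ℕ} (hl : u.length = u'.length)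
    (h : ∀ j ∈ E, j ≤ p → p < j + u.length → u.getD (p - j) 1 = u'.getD (p - j) 1) :
    clusterAt u E p = clusterAt u' E p := by
  unfold clusterAt
  congr 1
  refine sup_congr rfl fun j hj => ?_
  rw [← hl]
  split_ifs with hjp
  · rw [h j hj hjp.1 hjp.2]
  · rfl

lemma subset_embFinset_iff {u w : Word} {E : Finset ℕ} (hE : E ⊆ Icc 1 (w.length + 1 - u.length)) :
    E ⊆ embFinset u w ↔ ∀ i < w.length, clusterAt u E (i + 1) ≤ w.getD i 1 := by
  rw [← coe_subset, coe_embFinset]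
  constructor
  · refine fun hEm i hi => clusterAt_le_iff.2 fun j hj hji hij => ?_
    obtain ⟨hj1, -, hdom⟩ := hEm hj
    have hk : i + 1 - j < u.length := by omega
    have := hdom (i + 1 - j) hk
    rwa [show j - 1 + (i + 1 - j) = i by omega] at this
  · intro hw j hj
    have hj' := mem_Icc.1 (hE hj)
    refine ⟨hj'.1, by omega, fun k hk => ?_⟩
    have := (clusterAt_le_iff.1 (hw (j - 1 + k) (by omega))) j hj (by omega) (by omega)
    rwa [show j - 1 + k + 1 - j = k by omega] at this

def rebase (ℓ : ℕ) (c c' : ℕ → ℕ+) (w : Word) : Word :=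
  (List.range ℓ).map fun i => Nat.toPNat (w.getD i 1 - c i + c' i) (by positivity)

@[simp] lemma length_rebase (ℓ : ℕ) (c c' : ℕ → ℕ+) (w : Word) : (rebase ℓ c c' w).length = ℓ := by
  simp [rebase]

lemma coe_getD_rebase {ℓ i : ℕ} (c c' : ℕ → ℕ+) (w : Word) (hi : i < ℓ) :
    ((rebase ℓ c c' w).getD i 1 : ℕ) = w.getD i 1 - c i + c' i := by
  rw [rebase, List.getD_eq_getElem _ _ (by simpa using hi), List.getElem_map, List.getElem_range]
  rfl

lemma rebase_mem_and_rebase_rebase {ℓ s : ℕ} {c c' : ℕ → ℕ+}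
    (h : ∑ i ∈ range ℓ, (c i : ℕ) = ∑ i ∈ range ℓ, (c' i : ℕ)) {w : Word}
    (hw : w ∈ ({w ∈ words ℓ s | ∀ i < ℓ, c i ≤ w.getD i 1} : Finset Word)) :
    rebase ℓ c c' w ∈ ({w ∈ words ℓ s | ∀ i < ℓ, c' i ≤ w.getD i 1} : Finset Word) ∧
      rebase ℓ c' c (rebase ℓ c c' w) = w := by
  simp only [mem_filter, mem_words, length_rebase, true_and] at hw ⊢
  obtain ⟨⟨hℓ, hs⟩, hdom⟩ := hw
  have hdom' (i : ℕ) (hi : i < ℓ) : (c i : ℕ) ≤ w.getD i 1 := hdom i hi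
  refine ⟨⟨?_, fun i hi => ?_⟩, ?_⟩
  · have : ht (rebase ℓ c c' w) + ∑ i ∈ range ℓ, (c i : ℕ) = ht w + ∑ i ∈ range ℓ, (c' i : ℕ) := by
      rw [ht_eq_sum, ht_eq_sum, length_rebase, hℓ, ← sum_add_distrib, ← sum_add_distrib]
      refine sum_congr rfl fun i hi => ?_
      have := hdom' i (mem_range.1 hi)
      rw [coe_getD_rebase c c' w (mem_range.1 hi)]
      omega
    omega
  · rw [← PNat.coe_le_coe, coe_getD_rebase c c' w hi]
    omega
  · refine List.ext_getElem (by simp [hℓ]) fun i hi _ => ?_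
    have hi' : i < ℓ := by simpa using hi
    rw [← List.getD_eq_getElem _ 1, ← List.getD_eq_getElem _ 1, ← PNat.coe_inj,
      coe_getD_rebase c' c _ hi', coe_getD_rebase c c' w hi']
    have := hdom' i hi'
    omega

lemma card_dominating_eq_of_sum_eq {ℓ s : ℕ} {c c' : ℕ → ℕ+}
    (h : ∑ i ∈ range ℓ, (c i : ℕ) = ∑ i ∈ range ℓ, (c' i : ℕ)) :
    #{w ∈ words ℓ s | ∀ i < ℓ, c i ≤ w.getD i 1} = #{w ∈ words ℓ s | ∀ i < ℓ, c' i ≤ w.getD i 1} :=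
  card_nbij' (rebase ℓ c c') (rebase ℓ c' c) (fun _ hw => (rebase_mem_and_rebase_rebase h hw).1)
    (fun _ hw => (rebase_mem_and_rebase_rebase h.symm hw).1)
    (fun _ hw => (rebase_mem_and_rebase_rebase h hw).2)
    (fun _ hw => (rebase_mem_and_rebase_rebase h.symm hw).2)

lemma getD_append_cons_append_cons (x y z : Word) (c d : ℕ+) (m : ℕ) :
    (x ++ c :: (y ++ d :: z)).getD m 1 =
      if m = x.length then c else if m = x.length + y.length + 1 then d
      else (x ++ 1 :: (y ++ 1 :: z)).getD m 1 := by
  simp only [List.getD_eq_getElem?_getD, List.getElem?_append, List.getElem?_cons]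
  split_ifs <;> first | rfl | omega

lemma clusterAt_append_cons_append_cons {x y z : Word} {c d : ℕ+}
    (hc : ∀ m, (x ++ 1 :: (y ++ 1 :: z)).getD m 1 ≤ c)
    (hd : ∀ m, (x ++ 1 :: (y ++ 1 :: z)).getD m 1 ≤ d) (E : Finset ℕ) (p : ℕ) :
    clusterAt (x ++ c :: (y ++ d :: z)) E p =
      if p ∈ E.image (· + x.length) then
        (if p ∈ E.image (· + (x.length + y.length + 1)) then max c d else c)
      else if p ∈ E.image (· + (x.length + y.length + 1)) then d
      else clusterAt (x ++ 1 :: (y ++ 1 :: z)) E p := by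
  set t := x ++ c :: (y ++ d :: z)
  have hlen : t.length = x.length + y.length + z.length + 2 := by
    simp only [List.length_append, List.length_cons, t]
    omega
  have letter (j : ℕ) := getD_append_cons_append_cons x y z c d (p - j)
  have lower {j k : ℕ} (hj : j ∈ E) (hpj : j + k = p) (hk : k < t.length) :
      t.getD k 1 ≤ clusterAt t E p := by
    have := le_clusterAt (u := t) hj (p := p) (by omega) (by omega)
    rwa [show p - j = k by omega] at this
  have hc_at : t.getD x.length 1 = c := by rw [getD_append_cons_append_cons, if_pos rfl]
  have hd_at : t.getD (x.length + y.length + 1) 1 = d := by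
    rw [getD_append_cons_append_cons, if_neg (by omega), if_pos rfl]
  simp only [mem_image]
  split_ifs with hpc hpd hpd
  · obtain ⟨jc, hjc, hpc⟩ := hpc
    obtain ⟨jd, hjd, hpd⟩ := hpd
    refine le_antisymm (clusterAt_le_iff.2 fun j hj h1 h2 => ?_) (max_le ?_ ?_)
    · rw [letter]
      split_ifs
      exacts [le_max_left _ _, le_max_right _ _, le_max_of_le_left (hc _)]
    · exact hc_at ▸ lower hjc hpc (by omega)
    · exact hd_at ▸ lower hjd hpd (by omega)
  · obtain ⟨jc, hjc, hpc⟩ := hpc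
    refine le_antisymm (clusterAt_le_iff.2 fun j hj h1 h2 => ?_) (hc_at ▸ lower hjc hpc (by omega))
    rw [letter]
    split_ifs
    exacts [le_rfl, absurd ⟨j, hj, by omega⟩ hpd, hc _]
  · obtain ⟨jd, hjd, hpd⟩ := hpd
    refine le_antisymm (clusterAt_le_iff.2 fun j hj h1 h2 => ?_) (hd_at ▸ lower hjd hpd (by omega))
    rw [letter]
    split_ifs
    exacts [absurd ⟨j, hj, by omega⟩ hpc, le_rfl, hd _]
  · refine clusterAt_congr (by simp [t]) fun j hj h1 h2 => ?_
    rw [letter, if_neg fun h => hpc ⟨j, hj, by omega⟩, if_neg fun h => hpd ⟨j, hj, by omega⟩]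

lemma card_filter_succ_mem_image_add {E : Finset ℕ} {ℓ n k : ℕ} (hE : E ⊆ Icc 1 (ℓ + 1 - n))
    (hk : k < n) : #{i ∈ range ℓ | i + 1 ∈ E.image (· + k)} = #E := by
  have : {i ∈ range ℓ | i + 1 ∈ E.image (· + k)} = E.image (· + k - 1) := by
    ext i
    simp only [mem_filter, mem_range, mem_image]
    constructor
    · rintro ⟨-, j, hj, hji⟩
      exact ⟨j, hj, by omega⟩
    · rintro ⟨j, hj, rfl⟩
      have := mem_Icc.1 (hE hj)
      exact ⟨by omega, j, hj, by omega⟩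
  rw [this, card_image_of_injOn fun i hi j hj (hij : i + k - 1 = j + k - 1) => ?_]
  have := mem_Icc.1 (hE hi)
  have := mem_Icc.1 (hE hj)
  omega

lemma sum_clusterAt_swap_eq {x y z : Word} {a b : ℕ+} (hab : a ≤ b)
    (hr : ∀ m, (x ++ 1 :: (y ++ 1 :: z)).getD m 1 ≤ a) {ℓ : ℕ} {E : Finset ℕ}
    (hE : E ⊆ Icc 1 (ℓ + 1 - (x ++ a :: (y ++ b :: z)).length)) :
    ∑ i ∈ range ℓ, (clusterAt (x ++ a :: (y ++ b :: z)) E (i + 1) : ℕ) =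
      ∑ i ∈ range ℓ, (clusterAt (x ++ b :: (y ++ a :: z)) E (i + 1) : ℕ) := by
  set Sa := E.image (· + x.length)
  set Sb := E.image (· + (x.length + y.length + 1))
  have hb : ∀ m, (x ++ 1 :: (y ++ 1 :: z)).getD m 1 ≤ b := fun m => (hr m).trans hab
  have hpt (p : ℕ) :
      (clusterAt (x ++ a :: (y ++ b :: z)) E p : ℕ) + (if p ∈ Sa then (b : ℕ) else 0) +
        (if p ∈ Sb then (a : ℕ) else 0) =
      clusterAt (x ++ b :: (y ++ a :: z)) E p + (if p ∈ Sa then (a : ℕ) else 0) +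
        (if p ∈ Sb then (b : ℕ) else 0) := by
    rw [clusterAt_append_cons_append_cons hr hb, clusterAt_append_cons_append_cons hb hr, max_comm]
    split_ifs <;> omega
  have hsum := sum_congr rfl fun i (_ : i ∈ range ℓ) => hpt (i + 1)
  simp only [sum_add_distrib, sum_ite, sum_const_zero, sum_const, smul_eq_mul, add_zero] at hsum
  have hlen : (x ++ a :: (y ++ b :: z)).length = x.length + y.length + z.length + 2 := by
    simp only [List.length_append, List.length_cons]
    omega
  rw [card_filter_succ_mem_image_add hE (by omega), card_filter_succ_mem_image_add hE (by omega)]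
    at hsum
  linarith

lemma getD_le_of_forall_mem_le {l : Word} {a : ℕ+} (h : ∀ c ∈ l, c ≤ a) (m : ℕ) :
    l.getD m 1 ≤ a := by
  rw [List.getD_eq_getElem?_getD]
  cases hm : l[m]? with
  | none => exact one_le
  | some c => exact h c (List.mem_of_getElem? hm)

theorem sswilf_swap_of_le {x y z : Word} {a b : ℕ+} (hab : a ≤ b) (hle : ∀ c ∈ x ++ y ++ z, c ≤ a) :
    SSWilf (x ++ a :: (y ++ b :: z)) (x ++ b :: (y ++ a :: z)) := by
  have hr : ∀ m, (x ++ 1 :: (y ++ 1 :: z)).getD m 1 ≤ a := by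
    refine getD_le_of_forall_mem_le fun c hc => ?_
    simp only [List.mem_append, List.mem_cons] at hc hle
    rcases hc with hc | rfl | hc | rfl | hc
    exacts [hle c (by tauto), one_le, hle c (by tauto), one_le, hle c (by tauto)]
  have hlen : (x ++ a :: (y ++ b :: z)).length = (x ++ b :: (y ++ a :: z)).length := by simp
  refine sswilf_of_card_filter_subset_eq hlen fun ℓ s E hE => ?_
  have hdom (t : Word) (ht : t.length = (x ++ a :: (y ++ b :: z)).length) :
      {w ∈ words ℓ s | E ⊆ embFinset t w} =
        {w ∈ words ℓ s | ∀ i < ℓ, clusterAt t E (i + 1) ≤ w.getD i 1} :=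
    filter_congr fun w hw => by
      rw [mem_words] at hw
      rw [subset_embFinset_iff (by rwa [hw.1, ht]), hw.1]
  rw [hdom _ rfl, hdom _ hlen.symm]
  exact card_dominating_eq_of_sum_eq (sum_clusterAt_swap_eq hab hr hE)

lemma IsPerm.count_eq_one {n : ℕ} {w : Word} (h : IsPerm n w) {k : ℕ} (h1 : 1 ≤ k) (hk : k ≤ n) :
    (w.map (fun c : ℕ+ => (c : ℕ))).count k = 1 := by
  simpa [← List.map_eq_flatMap, Function.comp_def] using h.2 k h1 hk

lemma IsPerm.coe_le {n : ℕ} {w : Word} (h : IsPerm n w) {c : ℕ+} (hc : c ∈ w) : (c : ℕ) ≤ n := by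
  set L := w.map (fun c : ℕ+ => (c : ℕ))
  have hsub : Icc 1 n ⊆ L.toFinset := fun k hk => by
    rw [List.mem_toFinset, ← List.count_pos_iff, h.count_eq_one (mem_Icc.1 hk).1 (mem_Icc.1 hk).2]
    exact one_pos
  have hcard : #L.toFinset ≤ #(Icc 1 n) := by
    simpa [L, h.1] using L.toFinset_card_le
  have hcL : (c : ℕ) ∈ L.toFinset := List.mem_toFinset.2 (List.mem_map_of_mem hc)
  rw [← eq_of_subset_of_card_le hsub hcard] at hcL
  exact (mem_Icc.1 hcL).2

/-- swapping the letters `n-1` and `n` in a permutation of `[n]`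
yields a super-strongly Wilf equivalent permutation. -/
theorem sswilf_swap_top_two (n : ℕ) (x y z : Word) (a b : ℕ+)
    (ha : (a : ℕ) = n - 1) (hb : (b : ℕ) = n)
    (h : IsPerm n (x ++ a :: (y ++ b :: z))) :
    SSWilf (x ++ a :: (y ++ b :: z)) (x ++ b :: (y ++ a :: z)) := by
  refine sswilf_swap_of_le (by rw [← PNat.coe_le_coe]; omega) fun c hc => ?_
  have hcn := h.coe_le (c := c) <| by
    simp only [List.append_assoc, List.mem_append, List.mem_cons] at hc ⊢
    tauto
  have hcount := h.count_eq_one (by have := a.pos; omega) le_rfl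
  simp only [List.map_append, List.map_cons, hb, List.count_append, List.count_cons, beq_iff_eq,
    ↓reduceIte] at hcount
  have hc_ne : (c : ℕ) ≠ n := by
    intro hcn_eq
    have hmem : n ∈ (x ++ y ++ z).map (fun c : ℕ+ => (c : ℕ)) := hcn_eq ▸ List.mem_map_of_mem hc
    have := List.count_pos_iff.2 hmem
    simp only [List.map_append, List.count_append] at this
    omega
  rw [← PNat.coe_le_coe]
  omega
end

section
/- Cross equivalence is an equivalence relation on the set of permutations of [n], and every permutation u is cross equivalent to its reversal ũ. -/
/-! Reversing a permutation of `[n]` moves the letter at position `p` to position `n + 1 - p`;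
this reflection of `[1, n]` preserves all distances, so every `i⁺(u)` is unchanged. -/

theorem List.idxOf_reverse_of_count_eq_one {α : Type*} [BEq α] [LawfulBEq α] {a : α} :
    ∀ {l : List α}, l.count a = 1 → l.reverse.idxOf a = l.length - 1 - l.idxOf a
  | [], h => by simp at h
  | b :: t, h => by
    rw [List.count_cons] at h
    by_cases hba : b = a
    · subst hba
      have hnot : b ∉ t.reverse := by simpa using List.count_eq_zero.mp (by simpa using h)
      simp [List.idxOf_append_of_notMem hnot]
    · have ht : t.count a = 1 := by simpa [hba] using h
      have hmem : a ∈ t.reverse := by simpa using List.count_pos_iff.mp (by omega)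
      rw [List.reverse_cons, List.idxOf_append_of_mem hmem, idxOf_reverse_of_count_eq_one ht,
        List.idxOf_cons_ne _ hba, List.length_cons]
      have := List.idxOf_lt_length_of_mem (List.mem_reverse.mp hmem)
      omega

theorem Nat.dist_tsub_tsub {m a b : ℕ} (ha : a ≤ m) (hb : b ≤ m) :
    Nat.dist (m - a) (m - b) = Nat.dist a b := by
  unfold Nat.dist
  omega

-- The coercion in `w.map (fun x => (x : ℕ))` is elaborated through the list monad.
theorem Word.map_coe (w : Word) : w.map (fun x => (x : ℕ)) = w.map PNat.val := by
  simp [List.map_eq_flatMap]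

section Perm

variable {n : ℕ} {u : Word} {k : ℕ}

theorem IsPerm.count_eq_one_s9 (hu : IsPerm n u) (h1 : 1 ≤ k) (h2 : k ≤ n) :
    (u.map PNat.val).count k = 1 :=
  Word.map_coe u ▸ hu.2 k h1 h2

theorem pos_le (hu : IsPerm n u) (h1 : 1 ≤ k) (h2 : k ≤ n) : pos u k ≤ n := by
  have hmem : k ∈ u.map PNat.val :=
    List.count_pos_iff.mp (by rw [hu.count_eq_one_s9 h1 h2]; omega)
  have := List.idxOf_lt_length_of_mem hmem
  rw [List.length_map, hu.1] at this
  rwa [pos, Word.map_coe]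

theorem pos_reverse (hu : IsPerm n u) (h1 : 1 ≤ k) (h2 : k ≤ n) :
    pos u.reverse k = n + 1 - pos u k := by
  have := pos_le hu h1 h2
  rw [pos, Word.map_coe] at this ⊢
  rw [pos, Word.map_coe, List.map_reverse,
    List.idxOf_reverse_of_count_eq_one (hu.count_eq_one_s9 h1 h2), List.length_map, hu.1]
  omega

theorem iplus_reverse (hu : IsPerm n u) {i : ℕ} (h1 : 1 ≤ i) (h2 : i ≤ n) :
    iplus n u.reverse i = iplus n u i := by
  refine Multiset.map_congr rfl fun j hj => ?_
  obtain ⟨hij, hjn⟩ := Multiset.mem_Icc.mp hj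
  have hj1 : 1 ≤ j := by omega
  rw [pos_reverse hu h1 h2, pos_reverse hu hj1 hjn]
  exact Nat.dist_tsub_tsub ((pos_le hu h1 h2).trans n.le_succ)
    ((pos_le hu hj1 hjn).trans n.le_succ)

theorem crossEq_reverse (hu : IsPerm n u) : CrossEq n u u.reverse :=
  fun _ h1 h2 => (iplus_reverse hu h1 (by omega)).symm

end Perm

theorem crossEq_equivalence (n : ℕ) : Equivalence (CrossEq n) where
  refl _ _ _ _ := rfl
  symm h i h1 h2 := (h i h1 h2).symm
  trans h h' i h1 h2 := (h i h1 h2).trans (h' i h1 h2)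

/-- cross equivalence is an equivalence relation on permutations
of `[n]`, and every permutation is cross equivalent to its reversal. -/
theorem crossEq_equivalence_and_reverse (n : ℕ) :
    Equivalence (fun u v : {w : Word // IsPerm n w} => CrossEq n u.1 v.1) ∧
      ∀ u : Word, IsPerm n u → CrossEq n u u.reverse :=
  ⟨(crossEq_equivalence n).comap Subtype.val, fun _ hu => crossEq_reverse hu⟩
end
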